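/- arXiv:1403.7662 — 2 statements merged into one kernel-verified Lean document; each statement's English description precedes it below -/
import Mathlib

section
/- Let $F$ be a non-archimedean local field of characteristic $0$ with ring of integers $\mathfrak{o}$, maximal ideal $\mathfrak{p}$, and let $e = \mathrm{ord}(2)$. For $0 \le r < e$, the subgroup $\mathfrak{o}^{\times 2}(1+\mathfrak{p}^{2r})$ of $\mathfrak{o}^\times$ equals $\mathfrak{o}^{\times 2}(1+\mathfrak{p}^{2r+1})$ (with the convention that $1+\mathfrak{p}^0$ means $\mathfrak{o}^\times$). -/
/- STATEMENT 0: For a non-archimedean local field `F` of characteristic 0 (a finite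
extension of `ℚ_p`) with normalized valuation `ord` and `e = ord 2`, for `0 ≤ r < e`
one has `𝔬^{×2}(1+𝔭^{2r}) = 𝔬^{×2}(1+𝔭^{2r+1})` inside `𝔬^×`
(with the convention `1+𝔭^0 = 𝔬^×`). -/

/-- The group of units of the valuation ring: elements of valuation zero. -/
def unitSet {F : Type*} [Field F] (ord : F → ℤ) : Set F :=
  {x | x ≠ 0 ∧ ord x = 0}

/-- `1 + 𝔭^c`, with the convention that for `c = 0` this means `𝔬^×`. -/
def onePlusP {F : Type*} [Field F] (ord : F → ℤ) : ℕ → Set F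
  | 0 => unitSet ord
  | (c+1) => {x | x - 1 = 0 ∨ ((c : ℤ) + 1 ≤ ord (x - 1))}

/-- `𝔬^{×2} · (1 + 𝔭^c)`. -/
def sqUnitsTimes {F : Type*} [Field F] (ord : F → ℤ) (c : ℕ) : Set F :=
  {x | ∃ v ∈ unitSet ord, ∃ w ∈ onePlusP ord c, x = v ^ 2 * w}

/-!
Transport `ord` to a `ℤᵐ⁰`-valued valuation `v` on `F`. As `v 2 < 1` and `v p < 1`, the residue
field `k` has characteristic both `2` and `p`, so `p = 2`.

The field `k` is algebraic over `𝔽_p`: a relation `∑ cᵢ aⁱ = 0` over `ℚ_p`, divided by a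
coefficient of largest norm, has `ℤ_p`-coefficients one of which is `1`, and it reduces to a
nonzero relation over `𝔽_p`. This needs `v ≤ 1` on `ℤ_p`; for a unit `u`, Hensel's lemma gives
`u ^ (p - 1)` an `m`-th root for every `m` prime to `p`, so `log (v u)` is divisible by
arbitrarily large integers and vanishes. Hence `k` is perfect, and in characteristic `2` every
element of `𝔬` is a square modulo `𝔭`.

Given `w = 1 + π ^ (2r) α` with `r ≥ 1`, pick `β` with `α ≡ β ^ 2 mod 𝔭`. Then
`(1 + π ^ r β) ^ 2 = 1 + 2 π ^ r β + π ^ (2r) β ^ 2 ≡ w mod 𝔭 ^ (2r + 1)` because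
`ord 2 ≥ r + 1`, so `w` lies in `𝔬^{×2} (1 + 𝔭 ^ (2r + 1))`; for `r = 0` take `β ≡ √w` itself.
-/

open WithZero Polynomial

lemma WithZero.exp_lt_one_iff {G : Type*} [AddMonoid G] [Preorder G] {a : G} :
    exp a < 1 ↔ a < 0 := by
  rw [← exp_zero, exp_lt_exp]

lemma WithZero.le_exp_neg_one_of_lt_one {x : ℤᵐ⁰} (hx : x < 1) : x ≤ exp (-1) := by
  rcases eq_or_ne x 0 with rfl | hx0
  · exact zero_le
  rw [← exp_log hx0, exp_le_exp]
  have : log x < 0 := (log_lt_iff_lt_exp hx0).2 hx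
  omega

lemma Valuation.eq_one_of_forall_exists_pow_eq {R : Type*} [Ring R] (v : Valuation R ℤᵐ⁰) {x : R}
    (hx : v x ≠ 0) (h : ∀ N : ℕ, ∃ m > N, ∃ y : R, y ^ m = x) : v x = 1 := by
  obtain ⟨m, hm, y, rfl⟩ := h (log (v x)).natAbs
  have hy : v y ≠ 0 := by
    rw [map_pow] at hx
    exact pow_ne_zero_iff (by omega) |>.1 hx
  have hdvd : (m : ℤ) ∣ log (v (y ^ m)) := by
    rw [map_pow, log_pow, nsmul_eq_mul]
    exact dvd_mul_right _ _
  rw [← exp_log hx, Int.eq_zero_of_dvd_of_natAbs_lt_natAbs hdvd (by omega), exp_zero]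

namespace PadicInt

variable {p : ℕ} [hp : Fact p.Prime]

lemma exists_pow_eq_of_norm_sub_one_lt_one {u : ℤ_[p]} (hu : ‖u - 1‖ < 1) {m : ℕ}
    (hm : p.Coprime m) : ∃ y : ℤ_[p], y ^ m = u := by
  have hnorm : ‖(X ^ m - C u : ℤ_[p][X]).aeval (1 : ℤ_[p])‖ <
      ‖(derivative (X ^ m - C u : ℤ_[p][X])).aeval (1 : ℤ_[p])‖ ^ 2 := by
    simpa [norm_sub_rev, derivative_X_pow, norm_natCast_eq_one_iff.2 hm] using hu
  obtain ⟨y, hy, -⟩ := hensels_lemma hnorm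
  exact ⟨y, by simpa [sub_eq_zero] using hy⟩

lemma norm_pow_card_sub_one_sub_one_lt_one (u : ℤ_[p]ˣ) : ‖(u : ℤ_[p]) ^ (p - 1) - 1‖ < 1 := by
  rw [← mem_nonunits, ← IsLocalRing.mem_maximalIdeal, ← ker_toZMod, RingHom.mem_ker, map_sub,
    map_pow, map_one, sub_eq_zero]
  exact ZMod.pow_card_sub_one_eq_one ((u.map toZMod.toMonoidHom).ne_zero)

lemma valuation_le_one (w : Valuation ℤ_[p] ℤᵐ⁰) (hwp : w p ≤ 1) (z : ℤ_[p]) : w z ≤ 1 := by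
  rcases eq_or_ne z 0 with rfl | hz
  · simp
  have hunit : ∀ u : ℤ_[p]ˣ, w u = 1 := by
    intro u
    have hu0 : w u ≠ 0 := (Units.map (w : ℤ_[p] →* ℤᵐ⁰) u).ne_zero
    have hpow : w ((u : ℤ_[p]) ^ (p - 1)) = 1 := by
      refine w.eq_one_of_forall_exists_pow_eq (by rw [map_pow]; exact pow_ne_zero _ hu0) fun N => ?_
      refine ⟨N * p + 1, Nat.lt_succ_of_le (Nat.le_mul_of_pos_right N hp.out.pos), ?_⟩
      exact exists_pow_eq_of_norm_sub_one_lt_one (norm_pow_card_sub_one_sub_one_lt_one u)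
        (by simp)
    rw [map_pow] at hpow
    exact (pow_eq_one_iff_left (by have := hp.out.two_le; omega)).1 hpow
  rw [unitCoeff_spec hz, map_mul, map_pow, hunit, one_mul]
  exact pow_le_one' hwp _

lemma exists_map_toZMod_ne_zero_aeval_eq_zero {A : Type*} [CommRing A] [Algebra ℚ_[p] A]
    {a : A} (ha : IsAlgebraic ℚ_[p] a) :
    ∃ P : ℤ_[p][X], P.map toZMod ≠ 0 ∧ aeval a (P.map Coe.ringHom) = 0 := by
  obtain ⟨Q, hQ0, hQa⟩ := ha
  obtain ⟨j, hj, hmax⟩ :=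
    Q.support.exists_max_image (fun i => ‖Q.coeff i‖) (nonempty_support_iff.2 hQ0)
  have hj0 : Q.coeff j ≠ 0 := mem_support_iff.1 hj
  have hle : ∀ i, ‖(C (Q.coeff j)⁻¹ * Q).coeff i‖ ≤ 1 := by
    intro i
    rw [coeff_C_mul, norm_mul, norm_inv, inv_mul_le_one₀ (norm_pos_iff.2 hj0)]
    by_cases hi : i ∈ Q.support
    · exact hmax i hi
    · simp [notMem_support_iff.1 hi]
  obtain ⟨P, hP⟩ : ∃ P : ℤ_[p][X], P.map Coe.ringHom = C (Q.coeff j)⁻¹ * Q := (mem_lifts _).1 <|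
    (lifts_iff_coeff_lifts (f := Coe.ringHom) _).2 fun i => ⟨⟨_, hle i⟩, rfl⟩
  have hPj : P.coeff j = 1 := by
    have h := congrArg (coeff · j) hP
    simp only [coeff_map, coeff_C_mul, inv_mul_cancel₀ hj0] at h
    exact Subtype.ext h
  refine ⟨P, fun h => by simpa [hPj] using congrArg (coeff · j) h, ?_⟩
  simp [hP, hQa]

end PadicInt

namespace Valuation

variable {F : Type*} [Field F] (v : Valuation F ℤᵐ⁰)

lemma charP_residueField {p : ℕ} [hp : Fact p.Prime] (hvp : v p < 1) :
    CharP (IsLocalRing.ResidueField v.valuationSubring) p := by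
  refine (CharP.charP_iff_prime_eq_zero hp.out).2 ?_
  rw [← map_natCast (IsLocalRing.residue _), IsLocalRing.residue_eq_zero_iff,
    mem_maximalIdeal_iff]
  simpa using hvp

lemma perfectField_residueField {p : ℕ} [Fact p.Prime] [Algebra ℚ_[p] F]
    [Algebra.IsAlgebraic ℚ_[p] F] (hvp : v p < 1) :
    PerfectField (IsLocalRing.ResidueField v.valuationSubring) := by
  have := v.charP_residueField hvp
  let := ZMod.algebra (IsLocalRing.ResidueField v.valuationSubring) p
  set ρ := IsLocalRing.residue v.valuationSubring
  have hintegral : ∀ z : ℤ_[p], algebraMap ℚ_[p] F z ∈ v.valuationSubring := fun z =>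
    PadicInt.valuation_le_one (v.comap ((algebraMap ℚ_[p] F).comp PadicInt.Coe.ringHom))
      (by simpa using hvp.le) z
  set ι : ℤ_[p] →+* v.valuationSubring :=
    ((algebraMap ℚ_[p] F).comp PadicInt.Coe.ringHom).codRestrict v.valuationSubring hintegral
  have hfac : ρ.comp ι = (algebraMap (ZMod p) _).comp PadicInt.toZMod := by
    ext z
    obtain ⟨y, hy⟩ := Ideal.mem_span_singleton'.1 <|
      PadicInt.maximalIdeal_eq_span_p (p := p) ▸ PadicInt.toZMod_spec z
    rw [eq_sub_iff_add_eq] at hy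
    rw [RingHom.comp_apply, RingHom.comp_apply, ← hy, ZMod.cast_eq_val]
    simp only [map_add, map_mul, map_natCast, CharP.cast_eq_zero, mul_zero, zero_add]
  have : Algebra.IsAlgebraic (ZMod p) (IsLocalRing.ResidueField v.valuationSubring) := by
    refine ⟨fun x => ?_⟩
    obtain ⟨a, rfl⟩ := IsLocalRing.residue_surjective x
    obtain ⟨P, hP0, hPa⟩ := PadicInt.exists_map_toZMod_ne_zero_aeval_eq_zero
      (Algebra.IsAlgebraic.isAlgebraic (R := ℚ_[p]) (a : F))
    have hιa : P.eval₂ ι a = 0 := by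
      apply v.valuationSubring.subtype_injective
      rw [aeval_def, eval₂_map] at hPa
      rwa [hom_eval₂, map_zero]
    refine ⟨P.map PadicInt.toZMod, hP0, ?_⟩
    rw [aeval_def, eval₂_map, ← hfac, ← hom_eval₂, hιa, map_zero]
  exact Algebra.IsAlgebraic.perfectField (ZMod p)

section TwoAdic

variable [Algebra ℚ_[2] F] [Algebra.IsAlgebraic ℚ_[2] F]

lemma exists_sq_sub_lt_one (hv2 : v 2 < 1) {a : F} (ha : v a ≤ 1) :
    ∃ b, v b ≤ 1 ∧ v (a - b ^ 2) < 1 := by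
  have := v.charP_residueField (p := 2) (by simpa using hv2)
  have := v.perfectField_residueField (p := 2) (by simpa using hv2)
  obtain ⟨y, hy⟩ := surjective_frobenius _ 2 (IsLocalRing.residue v.valuationSubring ⟨a, ha⟩)
  obtain ⟨b, rfl⟩ := IsLocalRing.residue_surjective y
  have hmem : (⟨a, ha⟩ - b ^ 2 : v.valuationSubring) ∈
      IsLocalRing.maximalIdeal v.valuationSubring := by
    rw [← IsLocalRing.residue_eq_zero_iff, _root_.map_sub, map_pow, ← hy, frobenius_def, sub_self]
  exact ⟨b, b.2, by simpa using (mem_maximalIdeal_iff _ v).1 hmem⟩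

lemma exists_sq_sub_le_exp {π : F} (hπ : v π = exp (-1)) {r : ℕ}
    (hv2 : v 2 ≤ exp (-(r + 1 : ℤ))) {w : F} (hw : v w = 1)
    (hw1 : v (w - 1) ≤ exp (-(2 * r : ℤ))) :
    ∃ b, v b = 1 ∧ v (w - b ^ 2) ≤ exp (-(2 * r + 1 : ℤ)) := by
  have hv2' : v 2 < 1 := hv2.trans_lt (exp_lt_one_iff.2 (by omega))
  have hπpow (n : ℕ) : v (π ^ n) = exp (-(n : ℤ)) := by
    rw [map_pow, hπ, ← exp_nsmul, nsmul_eq_mul, mul_neg_one]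
  rcases Nat.eq_zero_or_pos r with rfl | hr
  · obtain ⟨b, -, hb⟩ := v.exists_sq_sub_lt_one hv2' hw.le
    have hb2 : v (b ^ 2) = 1 := by
      rw [← hw]
      exact v.map_eq_of_sub_lt (by rwa [map_sub_swap, hw])
    refine ⟨b, (pow_eq_one_iff_left two_ne_zero).1 (by rwa [← map_pow]), ?_⟩
    simpa using le_exp_neg_one_of_lt_one hb
  have hπ0 : π ^ (2 * r) ≠ 0 := pow_ne_zero _ (by simp [← v.ne_zero_iff, hπ])
  set α := (w - 1) / π ^ (2 * r)
  have hα : v α ≤ 1 := by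
    rw [map_div₀, hπpow, div_le_one₀ exp_pos]
    exact_mod_cast hw1
  obtain ⟨β, hβ, hαβ⟩ := v.exists_sq_sub_lt_one hv2' hα
  have hπβ : v (π ^ r * β) ≤ exp (-(r : ℤ)) := by
    simpa [hπpow] using mul_le_mul' (le_refl (v (π ^ r))) hβ
  refine ⟨1 + π ^ r * β, v.map_one_add_of_lt (hπβ.trans_lt (exp_lt_one_iff.2 (by omega))), ?_⟩
  have hsplit : w - (1 + π ^ r * β) ^ 2 = π ^ (2 * r) * (α - β ^ 2) - 2 * (π ^ r * β) := by
    simp only [α]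
    field_simp
    ring
  rw [hsplit]
  apply v.map_sub_le
  · rw [map_mul, hπpow]
    calc exp (-((2 * r : ℕ) : ℤ)) * v (α - β ^ 2) ≤ exp (-((2 * r : ℕ) : ℤ)) * exp (-1) :=
          mul_le_mul' le_rfl (le_exp_neg_one_of_lt_one hαβ)
      _ = exp (-(2 * r + 1 : ℤ)) := by rw [← exp_add]; push_cast; ring_nf
  · rw [map_mul]
    calc v 2 * v (π ^ r * β) ≤ exp (-(r + 1 : ℤ)) * exp (-(r : ℤ)) := mul_le_mul' hv2 hπβ
      _ = exp (-(2 * r + 1 : ℤ)) := by rw [← exp_add]; ring_nf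

end TwoAdic

end Valuation

section OrdValuation

variable {F : Type*} [Field F] {ord : F → ℤ}

lemma ord_one (hmul : ∀ x y : F, x ≠ 0 → y ≠ 0 → ord (x * y) = ord x + ord y) :
    ord 1 = 0 := by
  have h := hmul 1 1 one_ne_zero one_ne_zero
  rw [mul_one] at h
  omega

open Classical in
noncomputable def ordValuation (hmul : ∀ x y : F, x ≠ 0 → y ≠ 0 → ord (x * y) = ord x + ord y)
    (hult : ∀ x y : F, x ≠ 0 → y ≠ 0 → x + y ≠ 0 → min (ord x) (ord y) ≤ ord (x + y)) :
    Valuation F ℤᵐ⁰ where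
  toFun x := if x = 0 then 0 else exp (-ord x)
  map_zero' := if_pos rfl
  map_one' := by simp [ord_one hmul]
  map_mul' x y := by
    by_cases hx : x = 0
    · simp [hx]
    by_cases hy : y = 0
    · simp [hy]
    simp [hx, hy, hmul x y hx hy, mul_comm]
  map_add_le_max' x y := by
    by_cases hx : x = 0
    · simp [hx]
    by_cases hy : y = 0
    · simp [hy]
    by_cases hxy : x + y = 0
    · simp [hxy]
    simp only [hx, hy, hxy, if_false, le_max_iff, exp_le_exp, neg_le_neg_iff]
    have := hult x y hx hy hxy
    omega

variable (hmul : ∀ x y : F, x ≠ 0 → y ≠ 0 → ord (x * y) = ord x + ord y)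
  (hult : ∀ x y : F, x ≠ 0 → y ≠ 0 → x + y ≠ 0 → min (ord x) (ord y) ≤ ord (x + y))

lemma ordValuation_apply {x : F} (hx : x ≠ 0) : ordValuation hmul hult x = exp (-ord x) :=
  if_neg hx

lemma ordValuation_le_exp_neg_iff {x : F} {n : ℤ} :
    ordValuation hmul hult x ≤ exp (-n) ↔ x = 0 ∨ n ≤ ord x := by
  rcases eq_or_ne x 0 with rfl | hx
  · simp
  rw [ordValuation_apply hmul hult hx, exp_le_exp, neg_le_neg_iff]
  simp [hx]

lemma ordValuation_eq_one_iff {x : F} : ordValuation hmul hult x = 1 ↔ x ∈ unitSet ord := by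
  rcases eq_or_ne x 0 with rfl | hx
  · simp [unitSet]
  simp [ordValuation_apply hmul hult hx, hx, unitSet]

lemma onePlusP_eq_setOf (c : ℕ) :
    onePlusP ord c =
      {x | ordValuation hmul hult x = 1 ∧ ordValuation hmul hult (x - 1) ≤ exp (-(c : ℤ))} := by
  ext x
  cases c with
  | zero =>
    simp only [onePlusP, ← ordValuation_eq_one_iff hmul hult, Set.mem_ofPred_eq, CharP.cast_eq_zero,
      neg_zero, exp_zero, iff_self_and]
    intro hx
    exact Valuation.map_sub_le _ hx.le (Valuation.map_one _).le
  | succ c =>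
    have hsub : x ∈ onePlusP ord (c + 1) ↔
        ordValuation hmul hult (x - 1) ≤ exp (-((c + 1 : ℕ) : ℤ)) := by
      rw [ordValuation_le_exp_neg_iff hmul hult]
      push_cast
      rfl
    rw [hsub, Set.mem_ofPred_eq, iff_and_self]
    intro h
    have hlt : ordValuation hmul hult (x - 1) < 1 :=
      h.trans_lt (exp_lt_one_iff.2 (by omega))
    simpa using Valuation.map_one_add_of_lt _ hlt

lemma exists_ordValuation_eq_exp_neg_one (hsurj : Function.Surjective ord) :
    ∃ π, ordValuation hmul hult π = exp (-1) := by
  obtain ⟨y, hy⟩ := hsurj 1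
  rcases eq_or_ne y 0 with rfl | hy0
  · obtain ⟨z, hz⟩ := hsurj (-1)
    have hz0 : z ≠ 0 := by
      rintro rfl
      omega
    refine ⟨z⁻¹, ?_⟩
    rw [map_inv₀, ordValuation_apply hmul hult hz0, hz]
    simp
  · exact ⟨y, by rw [ordValuation_apply hmul hult hy0, hy]⟩

lemma sqUnitsTimes_subset_of_forall_exists_sq_sub {c d : ℕ}
    (h : ∀ w ∈ onePlusP ord c, ∃ b, ordValuation hmul hult b = 1 ∧
      ordValuation hmul hult (w - b ^ 2) ≤ exp (-(d : ℤ))) :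
    sqUnitsTimes ord c ⊆ sqUnitsTimes ord d := by
  rintro _ ⟨u, hu, w, hw, rfl⟩
  obtain ⟨b, hb, hwb⟩ := h w hw
  rw [← ordValuation_eq_one_iff hmul hult] at hu
  rw [onePlusP_eq_setOf hmul hult] at hw
  have hb0 : b ≠ 0 := by simp [← (ordValuation hmul hult).ne_zero_iff, hb]
  refine ⟨u * b, (ordValuation_eq_one_iff hmul hult).1 (by simp [hu, hb]), w / b ^ 2, ?_,
    by field_simp⟩
  rw [onePlusP_eq_setOf hmul hult]
  refine ⟨by simp [hw.1, hb], ?_⟩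
  rwa [div_sub_one (pow_ne_zero 2 hb0), map_div₀, map_pow, hb, one_pow, div_one]

end OrdValuation

theorem statement_0
    (p : ℕ) [Fact p.Prime]
    (F : Type*) [Field F] [Algebra ℚ_[p] F] [FiniteDimensional ℚ_[p] F]
    (ord : F → ℤ)
    (hmul : ∀ x y : F, x ≠ 0 → y ≠ 0 → ord (x * y) = ord x + ord y)
    (hult : ∀ x y : F, x ≠ 0 → y ≠ 0 → x + y ≠ 0 → min (ord x) (ord y) ≤ ord (x + y))
    (hsurj : Function.Surjective ord)
    (hcomp : 0 < ord (algebraMap ℚ_[p] F p))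
    (e : ℕ) (he : (e : ℤ) = ord 2)
    (r : ℕ) (hr : r < e) :
    sqUnitsTimes ord (2 * r) = sqUnitsTimes ord (2 * r + 1) := by
  set v := ordValuation hmul hult
  have hv2 : v 2 ≤ exp (-(r + 1 : ℤ)) :=
    (ordValuation_le_exp_neg_iff hmul hult).2 (Or.inr (by omega))
  have hvp : v p < 1 := by
    have h := (ordValuation_le_exp_neg_iff hmul hult (n := 1)).2 (Or.inr hcomp)
    rw [map_natCast] at h
    exact h.trans_lt (exp_lt_one_iff.2 (by omega))
  obtain rfl : p = 2 := CharP.eq _ (v.charP_residueField hvp)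
    (v.charP_residueField (p := 2) (by exact_mod_cast hv2.trans_lt (exp_lt_one_iff.2 (by omega))))
  obtain ⟨π, hπ⟩ := exists_ordValuation_eq_exp_neg_one hmul hult hsurj
  refine (sqUnitsTimes_subset_of_forall_exists_sq_sub hmul hult fun w hw => ?_).antisymm
    (sqUnitsTimes_subset_of_forall_exists_sq_sub hmul hult fun w hw => ⟨1, map_one v, ?_⟩)
  all_goals rw [onePlusP_eq_setOf hmul hult] at hw
  · exact_mod_cast v.exists_sq_sub_le_exp hπ hv2 hw.1 (by exact_mod_cast hw.2)
  · rw [one_pow]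
    exact hw.2.trans (exp_le_exp.2 (by omega))
end

section
/- Let $F$ be a finite extension of $\mathbb{Q}_p$ with $p = 2$, ring of integers $\mathfrak{o}$, uniformizer $\varpi$, $e = \mathrm{ord}(2) > 0$, Haar measure with $\mathrm{Vol}(\mathfrak{o})=1$, and an additive character $\psi$ with conductor $\mathfrak{d}^{-1}$ where $\mathfrak{d} = (\boldsymbol\delta)$ is the different. If $x = \varpi^{2r-1} u$ with $u \in \mathfrak{o}^\times$ and $0 < r \le e$, then $\int_{\mathfrak{o}} \overline{\psi(t^2/(x\boldsymbol\delta))}\, dt = 0$. -/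
/-!
Take `c = ϖ^(r-1) v` with `v ∈ 𝔬`. Expanding `(t + c)²`, the cross term `2tc/(xδ)` has order at
least `e - r - ord δ ≥ -ord δ` for `t ∈ 𝔬`, so it lies in the conductor, and the translate by `c` of
`t ↦ ψ(t²/(xδ))` is this function multiplied by `ψ(v²/(ϖuδ))`. Since squaring is bijective on the
finite residue field, which has characteristic 2, `v` can be chosen with `v² ≡ x₀ϖuδ (mod 𝔭)`, where
`ord x₀ = -ord δ - 1` and `ψ x₀ ≠ 1`; then the factor is `ψ x₀ = -1`, and translation invariance of
`μ` gives `∫ = -∫`. The translation is carried to the integral through the pushforward of the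
measure along the integrand, which needs no measurability of translations, and the finiteness of
the residue field is a pigeonhole argument with the measures of `𝔬` and `𝔭`.
-/

open MeasureTheory

section Translation

variable {G : Type*} [AddGroup G] [MeasurableSpace G] {μ : Measure G}

theorem measure_preimage_add_of_measurableSet
    (hμ : ∀ (a : G) (s : Set G), MeasurableSet s → μ ((a + ·) ⁻¹' s) = μ s) (a : G) (s : Set G) :
    μ ((a + ·) ⁻¹' s) = μ s := by
  have hle : ∀ (a : G) (s : Set G), μ ((a + ·) ⁻¹' s) ≤ μ s := fun a s =>
    calc μ ((a + ·) ⁻¹' s) ≤ μ ((a + ·) ⁻¹' toMeasurable μ s) :=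
          measure_mono (Set.preimage_mono (subset_toMeasurable μ s))
      _ = μ s := by rw [hμ a _ (measurableSet_toMeasurable μ s), measure_toMeasurable]
  refine le_antisymm (hle a s) ?_
  simpa [Set.preimage_preimage] using hle (-a) ((a + ·) ⁻¹' s)

theorem measure_biUnion_range_preimage_add (hμ : ∀ (a : G) (s : Set G), μ ((a + ·) ⁻¹' s) = μ s)
    {H : AddSubgroup G} (hH : MeasurableSet (H : Set G))
    {g : ℕ → G} (hg : ∀ m n, m < n → -g m + g n ∉ H) (N : ℕ) :
    μ (⋃ n ∈ Finset.range N, (-g n + ·) ⁻¹' H) = N * μ H := by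
  induction N with
  | zero => simp
  | succ N ih =>
    have hdisj : Disjoint ((g N + ·) ⁻¹' ⋃ n ∈ Finset.range N, (-g n + ·) ⁻¹' H) H := by
      refine Set.disjoint_left.2 fun z hz hzH => ?_
      simp only [Set.mem_preimage, Set.mem_iUnion, Finset.mem_range, SetLike.mem_coe] at hz
      obtain ⟨n, hn, hnz⟩ := hz
      refine hg n N hn ?_
      simpa [add_assoc] using H.add_mem hnz (H.neg_mem hzH)
    have hN : (g N + ·) ⁻¹' ((-g N + ·) ⁻¹' (H : Set G)) = H := by
      ext z; simp
    rw [← hμ (g N), Finset.range_add_one, Finset.set_biUnion_insert, Set.preimage_union, hN,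
      Set.union_comm, measure_union hdisj hH, hμ, ih, Nat.cast_succ, add_one_mul]

theorem exists_lt_neg_add_mem_of_measure (hμ : ∀ (a : G) (s : Set G), μ ((a + ·) ⁻¹' s) = μ s)
    {H K : AddSubgroup G} (hHK : H ≤ K) (hH : MeasurableSet (H : Set G)) (hH0 : μ H ≠ 0)
    (hK : μ K ≠ ⊤) (g : ℕ → G) (hg : ∀ n, g n ∈ K) : ∃ m n, m < n ∧ -g m + g n ∈ H := by
  by_contra! hcon
  obtain ⟨N, hN⟩ := ENNReal.exists_nat_gt (ENNReal.div_ne_top hK hH0)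
  have hsub : ⋃ n ∈ Finset.range N, (-g n + ·) ⁻¹' (H : Set G) ⊆ K := by
    simp only [Set.iUnion_subset_iff]
    intro n _ z hz
    simpa using K.add_mem (hg n) (hHK hz)
  have hle := (measure_biUnion_range_preimage_add hμ hH hcon N).symm.trans_le (measure_mono hsub)
  exact hN.not_ge ((ENNReal.le_div_iff_mul_le (.inl hH0) (.inr hK)).2 hle)

end Translation

theorem integral_eq_zero_of_measure_preimage_neg {α E : Type*} [MeasurableSpace α]
    [NormedAddCommGroup E] [NormedSpace ℝ E] [MeasurableSpace E] [BorelSpace E]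
    [SecondCountableTopology E] {ν : Measure α} {f : α → E}
    (hf : ∀ s, MeasurableSet s → ν (f ⁻¹' (-s)) = ν (f ⁻¹' s)) : ∫ a, f a ∂ν = 0 := by
  by_cases hmeas : AEStronglyMeasurable f ν
  swap
  · exact integral_non_aestronglyMeasurable hmeas
  have hf' := hmeas.aemeasurable
  have hmap : ν.map (-f) = ν.map f := by
    ext s hs
    rw [Measure.map_apply_of_aemeasurable hf'.neg hs, Measure.map_apply_of_aemeasurable hf' hs,
      ← hf s hs]
    rfl
  have h := integral_map hf'.neg measurable_id.aestronglyMeasurable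
  rw [hmap, integral_map hf' measurable_id.aestronglyMeasurable] at h
  replace h : ∫ a, f a ∂ν = -∫ a, f a ∂ν := by simpa [integral_neg] using h
  have h2 : (2 : ℝ) • ∫ a, f a ∂ν = 0 := by rw [two_smul]; nth_rw 1 [h]; exact neg_add_cancel _
  exact (smul_eq_zero.1 h2).resolve_left two_ne_zero

theorem setIntegral_eq_zero_of_add_eq_neg {G E : Type*} [AddGroup G] [MeasurableSpace G]
    [NormedAddCommGroup E] [NormedSpace ℝ E] [MeasurableSpace E] [BorelSpace E]
    [SecondCountableTopology E] {μ : Measure G}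
    (hμ : ∀ (a : G) (s : Set G), μ ((a + ·) ⁻¹' s) = μ s) {S : Set G} (hS : MeasurableSet S)
    {f : G → E} {c : G} (hSc : ∀ t, c + t ∈ S ↔ t ∈ S) (hfc : ∀ t ∈ S, f (c + t) = -f t) :
    ∫ t in S, f t ∂μ = 0 := by
  refine integral_eq_zero_of_measure_preimage_neg fun s _ => ?_
  have htr : f ⁻¹' (-s) ∩ S = (c + ·) ⁻¹' (f ⁻¹' s ∩ S) := by
    ext t
    simp only [Set.mem_inter_iff, Set.mem_preimage, Set.mem_neg, hSc]
    constructor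
    · rintro ⟨hft, ht⟩; exact ⟨by rwa [hfc t ht], ht⟩
    · rintro ⟨hft, ht⟩; exact ⟨by rwa [hfc t ht] at hft, ht⟩
  rw [Measure.restrict_apply' hS, Measure.restrict_apply' hS, htr, hμ]

theorem apply_eq_neg_one_of_apply_add_self {A : Type*} [Add A] {ψ : A → ℂ}
    (hψadd : ∀ x y : A, ψ (x + y) = ψ x * ψ y) {y : A} (hy : ψ (y + y) = 1) (hy1 : ψ y ≠ 1) :
    ψ y = -1 :=
  (mul_self_eq_one_iff.1 (hψadd y y ▸ hy)).resolve_left hy1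

structure IsOrd {F : Type*} [Field F] (ord : F → ℤ) : Prop where
  map_mul : ∀ x y : F, x ≠ 0 → y ≠ 0 → ord (x * y) = ord x + ord y
  min_le_map_add : ∀ x y : F, x ≠ 0 → y ≠ 0 → x + y ≠ 0 → min (ord x) (ord y) ≤ ord (x + y)

namespace IsOrd

variable {F : Type*} [Field F] {ord : F → ℤ}

theorem map_one (hord : IsOrd ord) : ord 1 = 0 := by
  have := hord.map_mul 1 1 one_ne_zero one_ne_zero
  rw [mul_one] at this
  omega

theorem map_neg (hord : IsOrd ord) (y : F) : ord (-y) = ord y := by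
  have hm1 : ord (-1 : F) = 0 := by
    have := hord.map_mul (-1) (-1) (neg_ne_zero.2 one_ne_zero) (neg_ne_zero.2 one_ne_zero)
    rw [neg_mul_neg, one_mul, hord.map_one] at this
    omega
  rcases eq_or_ne y 0 with rfl | hy
  · rw [neg_zero]
  · rw [← neg_one_mul, hord.map_mul _ _ (neg_ne_zero.2 one_ne_zero) hy, hm1, zero_add]

theorem map_inv (hord : IsOrd ord) {y : F} (hy : y ≠ 0) : ord y⁻¹ = -ord y := by
  have := hord.map_mul y y⁻¹ hy (inv_ne_zero hy)
  rw [mul_inv_cancel₀ hy, hord.map_one] at this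
  omega

theorem map_pow (hord : IsOrd ord) {y : F} (hy : y ≠ 0) (n : ℕ) : ord (y ^ n) = n * ord y := by
  induction n with
  | zero => simp [hord.map_one]
  | succ n ih => rw [pow_succ, hord.map_mul _ _ (pow_ne_zero n hy) hy, ih]; push_cast; ring

/-- The fractional ideal `𝔭ⁿ`. -/
def ball (hord : IsOrd ord) (n : ℤ) : AddSubgroup F where
  carrier := {y | y = 0 ∨ n ≤ ord y}
  zero_mem' := .inl rfl
  add_mem' := by
    intro a b ha hb
    rcases eq_or_ne a 0 with rfl | ha0
    · rwa [zero_add]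
    rcases eq_or_ne b 0 with rfl | hb0
    · rwa [add_zero]
    by_cases hab : a + b = 0
    · exact .inl hab
    exact .inr ((le_min (ha.resolve_left ha0) (hb.resolve_left hb0)).trans
      (hord.min_le_map_add a b ha0 hb0 hab))
  neg_mem' := by
    rintro a (rfl | ha)
    · exact .inl neg_zero
    · exact .inr (by rwa [hord.map_neg])

theorem mem_ball_of_le (hord : IsOrd ord) {n : ℤ} {y : F} (h : n ≤ ord y) : y ∈ hord.ball n :=
  .inr h

theorem ball_anti (hord : IsOrd ord) {m n : ℤ} (hmn : m ≤ n) : hord.ball n ≤ hord.ball m :=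
  fun _ hy => hy.imp_right hmn.trans

theorem mul_mem_ball (hord : IsOrd ord) {m n : ℤ} {a b : F} (ha : a ∈ hord.ball m)
    (hb : b ∈ hord.ball n) : a * b ∈ hord.ball (m + n) := by
  rcases eq_or_ne a 0 with rfl | ha0
  · exact .inl (zero_mul b)
  rcases eq_or_ne b 0 with rfl | hb0
  · exact .inl (mul_zero a)
  exact hord.mem_ball_of_le (by
    rw [hord.map_mul a b ha0 hb0]; exact add_le_add (ha.resolve_left ha0) (hb.resolve_left hb0))

theorem pow_mem_ball_zero (hord : IsOrd ord) {a : F} (ha : a ∈ hord.ball 0) (k : ℕ) :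
    a ^ k ∈ hord.ball 0 := by
  induction k with
  | zero => exact hord.mem_ball_of_le (by rw [pow_zero, hord.map_one])
  | succ k ih => simpa [pow_succ] using hord.mul_mem_ball ih ha

theorem sub_mem_ball_one_of_sq_sub_sq (hord : IsOrd ord) (h2 : 1 ≤ ord (2 : F)) {a b : F}
    (ha : a ∈ hord.ball 0) (hb : b ∈ hord.ball 0) (hab : a ^ 2 - b ^ 2 ∈ hord.ball 1) :
    a - b ∈ hord.ball 1 := by
  rcases eq_or_ne (a - b) 0 with hd | hd
  · exact .inl hd
  -- in residue characteristic 2, `(a - b)² ≡ a² - b²` modulo `𝔭`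
  have hsq : (a - b) ^ 2 ∈ hord.ball 1 := by
    have h2b : 2 * b * (a - b) ∈ hord.ball 1 := by
      simpa using hord.mul_mem_ball (hord.mul_mem_ball (hord.mem_ball_of_le h2) hb)
        ((hord.ball 0).sub_mem ha hb)
    rw [show (a - b) ^ 2 = a ^ 2 - b ^ 2 - 2 * b * (a - b) by ring]
    exact (hord.ball 1).sub_mem hab h2b
  have := (hsq.resolve_left (pow_ne_zero 2 hd))
  rw [hord.map_pow hd] at this
  exact hord.mem_ball_of_le (by omega)

theorem sub_mem_ball_one_of_pow_two_pow_sub (hord : IsOrd ord) (h2 : 1 ≤ ord (2 : F)) (j : ℕ)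
    {a b : F} (ha : a ∈ hord.ball 0) (hb : b ∈ hord.ball 0)
    (hab : a ^ 2 ^ j - b ^ 2 ^ j ∈ hord.ball 1) : a - b ∈ hord.ball 1 := by
  induction j generalizing a b with
  | zero => simpa using hab
  | succ j ih =>
    refine hord.sub_mem_ball_one_of_sq_sub_sq h2 ha hb (ih (hord.pow_mem_ball_zero ha 2)
      (hord.pow_mem_ball_zero hb 2) ?_)
    simpa only [← pow_mul, ← pow_succ'] using hab

/-- `hfin` says that `𝔬/𝔭` is finite; squaring is injective on it, so the orbit of `w` under
squaring returns to `w` modulo `𝔭`, and a square root of `w` is found among its iterated squares. -/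
theorem exists_sq_sub_mem_ball_one (hord : IsOrd ord) (h2 : 1 ≤ ord (2 : F))
    (hfin : ∀ g : ℕ → F, (∀ n, g n ∈ hord.ball 0) → ∃ m n, m < n ∧ g n - g m ∈ hord.ball 1)
    {w : F} (hw : w ∈ hord.ball 0) : ∃ v ∈ hord.ball 0, v ^ 2 - w ∈ hord.ball 1 := by
  obtain ⟨m, n, hmn, hmn'⟩ := hfin (fun n => w ^ 2 ^ n) (fun n => hord.pow_mem_ball_zero hw _)
  refine ⟨w ^ 2 ^ (n - m - 1), hord.pow_mem_ball_zero hw _, ?_⟩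
  rw [← pow_mul, ← pow_succ, show n - m - 1 + 1 = n - m by omega, ← neg_sub]
  refine (hord.ball 1).neg_mem (hord.sub_mem_ball_one_of_pow_two_pow_sub h2 m hw
    (hord.pow_mem_ball_zero hw _) ?_)
  rw [← pow_mul, ← pow_add, show n - m + m = n by omega, ← neg_sub]
  exact (hord.ball 1).neg_mem hmn'

theorem exists_apply_sq_div_eq_neg_one (hord : IsOrd ord)
    (hsqrt : ∀ w ∈ hord.ball 0, ∃ v ∈ hord.ball 0, v ^ 2 - w ∈ hord.ball 1) {ψ : F → ℂ}
    (hψadd : ∀ x y : F, ψ (x + y) = ψ x * ψ y) {n : ℤ} (hψtriv : ∀ y ∈ hord.ball n, ψ y = 1)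
    {x₀ : F} (hx₀ : x₀ ≠ 0) (hx₀ord : ord x₀ = n - 1) (hψx₀ : ψ x₀ = -1)
    {b : F} (hb : b ≠ 0) (hbord : ord b = 1 - n) : ∃ v ∈ hord.ball 0, ψ (v ^ 2 / b) = -1 := by
  obtain ⟨v, hv, hvw⟩ := hsqrt (x₀ * b)
    (hord.mem_ball_of_le (by rw [hord.map_mul _ _ hx₀ hb]; omega))
  refine ⟨v, hv, ?_⟩
  have hb' : b⁻¹ ∈ hord.ball (n - 1) := hord.mem_ball_of_le (by rw [hord.map_inv hb]; omega)
  have herr := hψtriv _ (hord.ball_anti (by omega) (hord.mul_mem_ball hvw hb'))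
  rw [show v ^ 2 / b = x₀ + (v ^ 2 - x₀ * b) * b⁻¹ by field_simp; ring, hψadd, herr, hψx₀,
    mul_one]

theorem exists_apply_add_sq_div_eq_neg (hord : IsOrd ord)
    (hsqrt : ∀ w ∈ hord.ball 0, ∃ v ∈ hord.ball 0, v ^ 2 - w ∈ hord.ball 1) {ψ : F → ℂ}
    (hψadd : ∀ x y : F, ψ (x + y) = ψ x * ψ y) {n : ℤ} (hψtriv : ∀ y ∈ hord.ball n, ψ y = 1)
    {x₀ : F} (hx₀ : x₀ ≠ 0) (hx₀ord : ord x₀ = n - 1) (hψx₀ : ψ x₀ = -1)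
    {b : F} (hb : b ≠ 0) (hbord : ord b = 1 - n) {ϖ : F} (hϖ0 : ϖ ≠ 0) (hϖ : ord ϖ = 1) {k : ℕ}
    (hk : (k : ℤ) + 1 ≤ ord (2 : F)) :
    ∃ c ∈ hord.ball 0, ∀ t ∈ hord.ball 0,
      ψ ((c + t) ^ 2 / (ϖ ^ (2 * k) * b)) = -ψ (t ^ 2 / (ϖ ^ (2 * k) * b)) := by
  obtain ⟨v, hv, hψv⟩ :=
    hord.exists_apply_sq_div_eq_neg_one hsqrt hψadd hψtriv hx₀ hx₀ord hψx₀ hb hbord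
  have hϖk : ϖ ^ k ∈ hord.ball k := hord.mem_ball_of_le (by rw [hord.map_pow hϖ0, hϖ, mul_one])
  have hϖk' : (ϖ ^ k)⁻¹ ∈ hord.ball (-k) :=
    hord.mem_ball_of_le (by rw [hord.map_inv (pow_ne_zero k hϖ0), hord.map_pow hϖ0, hϖ, mul_one])
  have hb' : b⁻¹ ∈ hord.ball (n - 1) := hord.mem_ball_of_le (by rw [hord.map_inv hb]; omega)
  refine ⟨ϖ ^ k * v, hord.ball_anti (by omega) (hord.mul_mem_ball hϖk hv), fun t ht => ?_⟩
  have hcross : 2 * (v * t) * (ϖ ^ k)⁻¹ * b⁻¹ ∈ hord.ball n := hord.ball_anti (by omega)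
    (hord.mul_mem_ball (hord.mul_mem_ball (hord.mul_mem_ball (hord.mem_ball_of_le hk)
      (hord.mul_mem_ball hv ht)) hϖk') hb')
  have hsplit : (ϖ ^ k * v + t) ^ 2 / (ϖ ^ (2 * k) * b) =
      v ^ 2 / b + (2 * (v * t) * (ϖ ^ k)⁻¹ * b⁻¹ + t ^ 2 / (ϖ ^ (2 * k) * b)) := by
    field_simp
    ring
  rw [hsplit, hψadd, hψadd, hψv, hψtriv _ hcross, one_mul, neg_one_mul]

end IsOrd

theorem statement_4_general
    (F : Type*) [Field F]
    [MeasurableSpace F]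
    (ord : F → ℤ)
    (hmul : ∀ x y : F, x ≠ 0 → y ≠ 0 → ord (x * y) = ord x + ord y)
    (hult : ∀ x y : F, x ≠ 0 → y ≠ 0 → x + y ≠ 0 → min (ord x) (ord y) ≤ ord (x + y))
    (q : ℝ) (hq : 1 < q)
    (μ : Measure F)
    (hμtrans : ∀ (a : F) (s : Set F), MeasurableSet s → μ ((a + ·) ⁻¹' s) = μ s)
    (hμball : ∀ n : ℤ, μ {x : F | x = 0 ∨ n ≤ ord x} = ENNReal.ofReal (q ^ (-n)))
    (hmeasball : ∀ n : ℤ, MeasurableSet {x : F | x = 0 ∨ n ≤ ord x})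
    (δ : F) (hδ : δ ≠ 0)
    (ψ : F → ℂ)
    (hψadd : ∀ x y : F, ψ (x + y) = ψ x * ψ y)
    (hψtriv : ∀ x : F, (x = 0 ∨ -(ord δ) ≤ ord x) → ψ x = 1)
    (hψnontriv : ∃ x : F, x ≠ 0 ∧ ord x = -(ord δ) - 1 ∧ ψ x ≠ 1)
    (ϖ : F) (hϖ0 : ϖ ≠ 0) (hϖ : ord ϖ = 1)
    (e : ℕ) (he : (e : ℤ) = ord 2)
    (u : F) (hu : u ≠ 0) (hu0 : ord u = 0)
    (r : ℕ) (hr1 : 0 < r) (hr2 : r ≤ e)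
    (x : F) (hx : x = ϖ ^ (2 * r - 1) * u) :
    ∫ t in {y : F | y = 0 ∨ 0 ≤ ord y},
        (starRingEnd ℂ) (ψ (t ^ 2 / (x * δ))) ∂μ = 0 := by
  have hord : IsOrd ord := ⟨hmul, hult⟩
  have hμ := measure_preimage_add_of_measurableSet hμtrans
  have hsqrt : ∀ w ∈ hord.ball 0, ∃ v ∈ hord.ball 0, v ^ 2 - w ∈ hord.ball 1 := by
    refine fun w hw => hord.exists_sq_sub_mem_ball_one (by omega) (fun g hg => ?_) hw
    simpa only [sub_eq_neg_add] using exists_lt_neg_add_mem_of_measure hμ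
      (hord.ball_anti zero_le_one) (hmeasball 1)
      ((hμball 1).trans_ne (ENNReal.ofReal_pos.2 (zpow_pos (by linarith) _)).ne')
      ((hμball 0).trans_ne ENNReal.ofReal_ne_top) g hg
  obtain ⟨x₀, hx₀, hx₀ord, hψx₀⟩ := hψnontriv
  have hψx₀' : ψ x₀ = -1 := by
    refine apply_eq_neg_one_of_apply_add_self hψadd (hψtriv _ ?_) hψx₀
    show x₀ + x₀ ∈ hord.ball (-ord δ)
    rw [← two_mul]
    have h2 : (2 : F) ∈ hord.ball e := hord.mem_ball_of_le he.le
    exact hord.ball_anti (by omega) (hord.mul_mem_ball h2 (hord.mem_ball_of_le hx₀ord.ge))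
  have hb : ϖ * u * δ ≠ 0 := mul_ne_zero (mul_ne_zero hϖ0 hu) hδ
  obtain ⟨c, hc, hcper⟩ := hord.exists_apply_add_sq_div_eq_neg hsqrt hψadd (n := -ord δ) hψtriv
    hx₀ hx₀ord hψx₀' hb (by rw [hmul _ _ (mul_ne_zero hϖ0 hu) hδ, hmul _ _ hϖ0 hu]; omega)
    hϖ0 hϖ (k := r - 1) (by omega)
  have hxδ : x * δ = ϖ ^ (2 * (r - 1)) * (ϖ * u * δ) := by
    rw [hx, show 2 * r - 1 = 2 * (r - 1) + 1 by omega, pow_succ]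
    ring
  refine setIntegral_eq_zero_of_add_eq_neg hμ (S := hord.ball 0) (hmeasball 0) (c := c)
    (fun t => (hord.ball 0).add_mem_cancel_left hc) fun t ht => ?_
  rw [hxδ, hcper t ht, map_neg]

theorem statement_4
    (p : ℕ) [Fact p.Prime] (hp2 : p = 2)
    (F : Type*) [Field F] [Algebra ℚ_[p] F] [FiniteDimensional ℚ_[p] F]
    [MeasurableSpace F]
    (ord : F → ℤ)
    (hmul : ∀ x y : F, x ≠ 0 → y ≠ 0 → ord (x * y) = ord x + ord y)
    (hult : ∀ x y : F, x ≠ 0 → y ≠ 0 → x + y ≠ 0 → min (ord x) (ord y) ≤ ord (x + y))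
    (hsurj : Function.Surjective ord)
    (hcomp : 0 < ord (algebraMap ℚ_[p] F p))
    (q : ℝ) (hq : 1 < q)
    (μ : Measure F)
    (hμtrans : ∀ (a : F) (s : Set F), MeasurableSet s → μ ((a + ·) ⁻¹' s) = μ s)
    (hμball : ∀ n : ℤ, μ {x : F | x = 0 ∨ n ≤ ord x} = ENNReal.ofReal (q ^ (-n)))
    (hmeasball : ∀ n : ℤ, MeasurableSet {x : F | x = 0 ∨ n ≤ ord x})
    (δ : F) (hδ : δ ≠ 0)
    (ψ : F → ℂ) (hψmeas : Measurable ψ)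
    (hψadd : ∀ x y : F, ψ (x + y) = ψ x * ψ y)
    (hψnorm : ∀ x : F, ‖ψ x‖ = 1)
    (hψtriv : ∀ x : F, (x = 0 ∨ -(ord δ) ≤ ord x) → ψ x = 1)
    (hψnontriv : ∃ x : F, x ≠ 0 ∧ ord x = -(ord δ) - 1 ∧ ψ x ≠ 1)
    (ϖ : F) (hϖ0 : ϖ ≠ 0) (hϖ : ord ϖ = 1)
    (e : ℕ) (he : (e : ℤ) = ord 2) (hepos : 0 < e)
    (u : F) (hu : u ≠ 0) (hu0 : ord u = 0)
    (r : ℕ) (hr1 : 0 < r) (hr2 : r ≤ e)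
    (x : F) (hx : x = ϖ ^ (2 * r - 1) * u) :
    ∫ t in {y : F | y = 0 ∨ 0 ≤ ord y},
        (starRingEnd ℂ) (ψ (t ^ 2 / (x * δ))) ∂μ = 0 :=
  statement_4_general F ord hmul hult q hq μ hμtrans hμball hmeasball δ hδ ψ hψadd hψtriv hψnontriv
    ϖ hϖ0 hϖ e he u hu hu0 r hr1 hr2 x hx
end
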